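/- Let F be a fundamental matrix of the Fuchsian system Y' = Σ_{i=1}^r a_i/(x−t_i) · Y with a_i ∈ ℂ^{n×n} and distinct points t_1,...,t_r, and set G(x) := (F(x)(x−t_1)^{−1}, ..., F(x)(x−t_r)^{−1})^{tr} (a column of r blocks). Then the columns of G are solutions of the convolved system D_{c_{−1}(a)}: Y' = Σ_{k=1}^r b_k/(x−t_k) · Y, where (b_1,...,b_r) is the additive convolution of (a_1,...,a_r) with μ = −1. -/

import Mathlib

/-- The additive convolution matrix `b_k ∈ ℂ^{nr×nr}`. -/
def bconv {n r : ℕ} (a : Fin r → Matrix (Fin n) (Fin n) ℂ) (μ : ℂ) (k : Fin r) :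
    Matrix (Fin r × Fin n) (Fin r × Fin n) ℂ :=
  Matrix.of fun p q =>
    if p.1 = k then
      (if q.1 = k then a k + μ • (1 : Matrix (Fin n) (Fin n) ℂ) else a q.1) p.2 q.2
    else 0

/-- If `f` is a (column) solution of the Fuchsian system `Y' = Σ a_i/(x−t_i) Y`, then
the column `g(x) = ((x−t_1)⁻¹ f(x), …, (x−t_r)⁻¹ f(x))` of `G` is a solution of the
convolved system `Y' = Σ b_k/(x−t_k) Y`, where `(b_1,…,b_r)` is the additive
convolution of `(a_1,…,a_r)` with `μ = −1`. -/
theorem stmt16 {n r : ℕ} (a : Fin r → Matrix (Fin n) (Fin n) ℂ) (t : Fin r → ℂ)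
    (ht : ∀ i j, i ≠ j → t i ≠ t j) (s : Set ℂ) (hs : ∀ x ∈ s, ∀ i, x ≠ t i)
    (f : ℂ → Fin n → ℂ)
    (hf : ∀ x ∈ s, HasDerivAt f ((∑ i, (x - t i)⁻¹ • a i).mulVec (f x)) x) :
    ∀ x ∈ s,
      HasDerivAt (fun y => (fun p : Fin r × Fin n => (y - t p.1)⁻¹ * f y p.2))
        ((∑ k, (x - t k)⁻¹ • bconv a (-1) k).mulVec
          (fun p : Fin r × Fin n => (x - t p.1)⁻¹ * f x p.2)) x := by
  intro x hx
  have hxt : ∀ i, x - t i ≠ 0 := fun i => sub_ne_zero.mpr (hs x hx i)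
  rw [hasDerivAt_pi]
  intro p
  have hfp : HasDerivAt (fun y => f y p.2) ((∑ i, (x - t i)⁻¹ • a i).mulVec (f x) p.2) x :=
    (hasDerivAt_pi.mp (hf x hx)) p.2
  have hinv : HasDerivAt (fun y => (y - t p.1)⁻¹) (-1 / (x - t p.1) ^ 2) x := by
    have h0 := ((hasDerivAt_id x).sub_const (t p.1)).inv (hxt p.1)
    simp only [id] at h0
    exact h0
  have key : HasDerivAt (fun y => (y - t p.1)⁻¹ * f y p.2) _ x := hinv.mul hfp
  refine key.congr_deriv (Eq.symm ?_)
  simp only [Matrix.mulVec, Matrix.sum_apply, dotProduct, bconv, Matrix.of_apply,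
    Matrix.smul_apply, smul_eq_mul, mul_ite, mul_zero, Finset.sum_ite_eq, Finset.mem_univ,
    if_true]
  have hent : ∀ j : Fin r × Fin n,
      (if j.1 = p.1 then (a p.1 + (-1 : ℂ) • (1 : Matrix (Fin n) (Fin n) ℂ)) else a j.1) p.2 j.2
      = a j.1 p.2 j.2 - (if j.1 = p.1 then (1 : Matrix (Fin n) (Fin n) ℂ) p.2 j.2 else 0) := by
    intro j
    by_cases h : j.1 = p.1
    · simp [h, Matrix.add_apply, sub_eq_add_neg]
    · simp [h]
  have hrw : ∀ j : Fin r × Fin n,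
      (x - t p.1)⁻¹ *
          (if j.1 = p.1 then (a p.1 + (-1 : ℂ) • (1 : Matrix (Fin n) (Fin n) ℂ)) else a j.1) p.2 j.2
        * ((x - t j.1)⁻¹ * f x j.2)
      = (x - t p.1)⁻¹ * ((x - t j.1)⁻¹ * a j.1 p.2 j.2 * f x j.2)
        - (if j.1 = p.1 then (x - t p.1)⁻¹ * (x - t p.1)⁻¹
            * (1 : Matrix (Fin n) (Fin n) ℂ) p.2 j.2 * f x j.2 else 0) := by
    intro j
    rw [hent j]
    by_cases h : j.1 = p.1
    · simp only [h, if_true]; ring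
    · simp only [h, if_false]; ring
  calc ∑ j : Fin r × Fin n,
        (x - t p.1)⁻¹ *
          (if j.1 = p.1 then (a p.1 + (-1 : ℂ) • (1 : Matrix (Fin n) (Fin n) ℂ)) else a j.1) p.2 j.2
        * ((x - t j.1)⁻¹ * f x j.2)
      = (∑ j : Fin r × Fin n, (x - t p.1)⁻¹ * ((x - t j.1)⁻¹ * a j.1 p.2 j.2 * f x j.2))
        - ∑ j : Fin r × Fin n, (if j.1 = p.1 then (x - t p.1)⁻¹ * (x - t p.1)⁻¹
            * (1 : Matrix (Fin n) (Fin n) ℂ) p.2 j.2 * f x j.2 else 0) := by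
        rw [← Finset.sum_sub_distrib]; exact Finset.sum_congr rfl fun j _ => hrw j
    _ = -1 / (x - t p.1) ^ 2 * f x p.2 + (x - t p.1)⁻¹ * ∑ j, (∑ i, (x - t i)⁻¹ * a i p.2 j) * f x j := by
        rw [Fintype.sum_prod_type, Fintype.sum_prod_type]
        simp only [Finset.sum_ite_eq', Finset.mem_univ, if_true]
        simp only [Matrix.one_apply, mul_ite, mul_one, mul_zero, ite_mul, zero_mul,
          Finset.sum_ite_irrel, Finset.sum_const_zero, Finset.sum_ite_eq, Finset.sum_ite_eq',
          Finset.mem_univ, if_true, Finset.mul_sum, Finset.sum_mul]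
        rw [Finset.sum_comm]
        have h2 : -1 / (x - t p.1) ^ 2 = -((x - t p.1)⁻¹ * (x - t p.1)⁻¹) := by
          rw [sq]; field_simp
        rw [h2]
        ring
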